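/- (Pairing of products, orthogonality case) Let S_1,...,S_m be primitive series and P_1,...,P_n proper polynomials (no constant term) in K⟨Y⟩. If n > m, then ⟨P_1 ⧢_φ ⋯ ⧢_φ P_n, S_1 S_2 ⋯ S_m⟩ = 0. -/

import Mathlib

noncomputable section

open Finsupp

variable {K : Type*} [CommRing K] [Algebra ℚ K]
variable {Y : Type*} [DecidableEq Y]

/-- The word `w ∈ Y*` viewed as a basis element of `K⟨Y⟩`. -/
def word (w : List Y) : List Y →₀ K := Finsupp.single w 1

/-- Left concatenation by a letter, as a linear endomorphism of `K⟨Y⟩`. -/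
def consL (a : Y) : (List Y →₀ K) →ₗ[K] (List Y →₀ K) :=
  Finsupp.lmapDomain K K (List.cons a)

/-- `m` is the `φ`-deformed shuffle product: it satisfies the initialization
`1 ⧢ w = w ⧢ 1 = w` and the recursion
`(au) ⧢ (bv) = a (u ⧢ bv) + b (au ⧢ v) + φ(a,b)(u ⧢ v)`. -/
def IsPhiShuffle (φ : Y → Y → (Y →₀ K))
    (m : (List Y →₀ K) →ₗ[K] (List Y →₀ K) →ₗ[K] (List Y →₀ K)) : Prop :=
  (∀ w : List Y, m (word []) (word w) = word w) ∧
  (∀ w : List Y, m (word w) (word []) = word w) ∧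
  ∀ (a b : Y) (u v : List Y),
    m (word (a :: u)) (word (b :: v)) =
      consL a (m (word u) (word (b :: v))) + consL b (m (word (a :: u)) (word v)) +
      (φ a b).sum fun c k => k • consL c (m (word u) (word v))

/-- Bilinear extension of `φ` to `KY`. -/
def phiExt (φ : Y → Y → (Y →₀ K)) (p q : Y →₀ K) : Y →₀ K :=
  p.sum fun a ka => q.sum fun b kb => (ka * kb) • φ a b

/-- The extension of `φ` to `KY ⊗ KY → KY` is associative. -/
def PhiAssoc (φ : Y → Y → (Y →₀ K)) : Prop :=
  ∀ a b c : Y, phiExt φ (φ a b) (Finsupp.single c 1) = phiExt φ (Finsupp.single a 1) (φ b c)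

/-- The extension of `φ` is commutative. -/
def PhiComm (φ : Y → Y → (Y →₀ K)) : Prop := ∀ a b : Y, φ a b = φ b a

/-- `φ` is dualizable: for every letter `z` only finitely many pairs of letters
have `z` in the support of their `φ`-product. -/
def PhiDualizable (φ : Y → Y → (Y →₀ K)) : Prop :=
  ∀ z : Y, {p : Y × Y | φ p.1 p.2 z ≠ 0}.Finite

/-- Extension of an associative `φ` to nonempty words: `φ(xw) = φ(x, φ(w))`. -/
def phiWord (φ : Y → Y → (Y →₀ K)) : List Y → (Y →₀ K)
  | [] => 0
  | [x] => Finsupp.single x 1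
  | x :: y :: w => (phiWord φ (y :: w)).sum fun b k => k • φ x b

/-- `φ` is moderate: for every letter `y`, only finitely many nonempty words `w`
satisfy `⟨y, φ(w)⟩ ≠ 0`. -/
def PhiModerate (φ : Y → Y → (Y →₀ K)) : Prop :=
  ∀ y : Y, {w : List Y | w ≠ [] ∧ phiWord φ w y ≠ 0}.Finite

/-- Pairing of two polynomials (the words form an orthonormal basis). -/
def pairPP (p q : List Y →₀ K) : K := p.sum fun w a => a * q w

/-- Pairing `⟨S, p⟩` of a series with a polynomial. -/
def pairPS (S : List Y → K) (p : List Y →₀ K) : K := p.sum fun w a => a * S w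

/-- Concatenation product on `K⟨Y⟩`. -/
def concP (p q : List Y →₀ K) : List Y →₀ K :=
  p.sum fun u a => q.sum fun v b => Finsupp.single (u ++ v) (a * b)

/-- Concatenation powers. -/
def concPow (p : List Y →₀ K) : ℕ → (List Y →₀ K)
  | 0 => word []
  | n + 1 => concP p (concPow p n)

/-- Powers with respect to a bilinear product `m`. -/
def mpow (m : (List Y →₀ K) →ₗ[K] (List Y →₀ K) →ₗ[K] (List Y →₀ K))
    (p : List Y →₀ K) : ℕ → (List Y →₀ K)
  | 0 => word []
  | n + 1 => m p (mpow m p n)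

/-- `m`-product of a list of polynomials. -/
def prodM (m : (List Y →₀ K) →ₗ[K] (List Y →₀ K) →ₗ[K] (List Y →₀ K))
    (L : List (List Y →₀ K)) : List Y →₀ K :=
  L.foldr (fun p acc => m p acc) (word [])

/-- The unit series. -/
def oneS : List Y → K := fun w => if w = [] then 1 else 0

/-- Concatenation (Cauchy) product of series. -/
def mulS (S T : List Y → K) : List Y → K := fun w =>
  ∑ i ∈ Finset.range (w.length + 1), S (w.take i) * T (w.drop i)

/-- Concatenation powers of a series. -/
def powS (S : List Y → K) : ℕ → (List Y → K)
  | 0 => oneS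
  | n + 1 => mulS S (powS S n)

/-- Concatenation product of a list of series. -/
def prodS (L : List (List Y → K)) : List Y → K := L.foldr (fun S acc => mulS S acc) oneS

/-- The coproduct `Δ_{⧢_φ}` dual to `m`, on series: `Δ(S)(u,v) = ⟨S, u ⧢_φ v⟩`. -/
def DeltaS (m : (List Y →₀ K) →ₗ[K] (List Y →₀ K) →ₗ[K] (List Y →₀ K))
    (S : List Y → K) : List Y × List Y → K :=
  fun p => pairPS S (m (word p.1) (word p.2))

/-- `S` is primitive: `Δ_{⧢_φ}(S) = S ⊗ 1 + 1 ⊗ S`. -/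
def PrimS (m : (List Y →₀ K) →ₗ[K] (List Y →₀ K) →ₗ[K] (List Y →₀ K))
    (S : List Y → K) : Prop :=
  ∀ u v : List Y, DeltaS m S (u, v) =
    (if v = [] then S u else 0) + (if u = [] then S v else 0)

/-- `S` is group-like: `⟨S,1⟩ = 1` and `Δ_{⧢_φ}(S) = S ⊗ S`. -/
def GroupLikeS (m : (List Y →₀ K) →ₗ[K] (List Y →₀ K) →ₗ[K] (List Y →₀ K))
    (S : List Y → K) : Prop :=
  S [] = 1 ∧ ∀ u v : List Y, DeltaS m S (u, v) = S u * S v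

/-- `Δfn` is the (finitely supported) dual coproduct witnessing dualizability of `m`:
`⟨u ⧢_φ v, w⟩ = ⟨u ⊗ v, Δ(w)⟩`. -/
def IsDualWitness (m : (List Y →₀ K) →ₗ[K] (List Y →₀ K) →ₗ[K] (List Y →₀ K))
    (Δfn : List Y → (List Y × List Y →₀ K)) : Prop :=
  ∀ u v w : List Y, (m (word u) (word v)) w = Δfn w (u, v)

/-- All factorizations of a word into nonempty blocks. -/
def cuts : List Y → List (List (List Y))
  | [] => [[]]
  | a :: w =>
    (cuts w).flatMap fun parts =>
      match parts with
      | [] => [[[a]]]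
      | p :: ps => [[a] :: p :: ps, (a :: p) :: ps]

/-- The extended Eulerian projector `π₁` on series:
`π₁(S) = Σ_{k≥1} ((-1)^{k-1}/k) Σ_{u_1⋯u_k = w, u_i ∈ Y⁺} ⟨S, u_1 ⧢_φ ⋯ ⧢_φ u_k⟩ w`. -/
def piOneS (m : (List Y →₀ K) →ₗ[K] (List Y →₀ K) →ₗ[K] (List Y →₀ K))
    (S : List Y → K) : List Y → K := fun w =>
  ((cuts w).map fun parts =>
    algebraMap ℚ K ((-1) ^ (parts.length - 1) / (parts.length : ℚ)) *
      pairPS S (prodM m (parts.map word))).sum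

/-- Logarithm of a series `S` with `⟨S,1⟩ = 1`. -/
def logS (S : List Y → K) : List Y → K := fun w =>
  ∑ n ∈ Finset.Icc 1 w.length,
    algebraMap ℚ K ((-1) ^ (n - 1) / (n : ℚ)) * powS (fun t => S t - oneS t) n w

/-- Convolution of endomorphisms (valued in series), using a dual coproduct witness. -/
def convT (Δfn : List Y → (List Y × List Y →₀ K))
    (f g : (List Y →₀ K) → (List Y → K)) : (List Y →₀ K) → (List Y → K) :=
  fun P w => P.sum fun t a =>
    a * (Δfn t).sum fun p c => c * mulS (f (word p.1)) (g (word p.2)) w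

/-- The convolution unit `e = 1 ∘ ε`. -/
def eT : (List Y →₀ K) → (List Y → K) := fun P w => if w = [] then P [] else 0

/-- Convolution powers `π₁^{⋆ n}` of the Eulerian projector. -/
def convPowPi (m : (List Y →₀ K) →ₗ[K] (List Y →₀ K) →ₗ[K] (List Y →₀ K))
    (Δfn : List Y → (List Y × List Y →₀ K)) : ℕ → ((List Y →₀ K) → (List Y → K))
  | 0 => eT
  | n + 1 => convT Δfn (fun P => piOneS m fun t => P t) (convPowPi m Δfn n)

/-- Lyndon words: nonempty and lexicographically smaller than each proper suffix. -/
def IsLyndon [LinearOrder Y] (w : List Y) : Prop :=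
  w ≠ [] ∧ ∀ u v : List Y, u ≠ [] → v ≠ [] → w = u ++ v → List.Lex (· < ·) w v

/-- Strictly decreasing lists of Lyndon words with positive exponents,
indexing monomials in Lyndon words. -/
abbrev DecLyn (Y : Type*) [LinearOrder Y] :=
  {s : List (List Y × ℕ) // (∀ p ∈ s, IsLyndon p.1 ∧ 0 < p.2) ∧
    s.Chain' fun a b => List.Lex (· < ·) b.1 a.1}

/-- `⧢_φ`-monomial `l₁^{⧢ i₁} ⧢ ⋯ ⧢ l_k^{⧢ i_k}`. -/
def shMonomial (m : (List Y →₀ K) →ₗ[K] (List Y →₀ K) →ₗ[K] (List Y →₀ K))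
    (s : List (List Y × ℕ)) : List Y →₀ K :=
  s.foldr (fun p acc => m (mpow m (word p.1) p.2) acc) (word [])

/-- Concatenation monomial `Π_{l₁}^{i₁} ⋯ Π_{l_k}^{i_k}` in a family `Pi`. -/
def concMonomial (Pi : List Y → (List Y →₀ K)) (s : List (List Y × ℕ)) : List Y →₀ K :=
  s.foldr (fun p acc => concP (concPow (Pi p.1) p.2) acc) (word [])

/-- The singleton index `l¹ ∈ DecLyn Y` attached to a Lyndon word. -/
def singleIdx [LinearOrder Y] (l : List Y) (hl : IsLyndon l) : DecLyn Y :=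
  ⟨[(l, 1)], ⟨fun p hp => by
      rw [List.mem_singleton] at hp; subst hp; exact ⟨hl, Nat.one_pos⟩,
    List.isChain_singleton _⟩⟩

/-- `(s, r)` is the standard factorization of the Lyndon word `l`:
`l = sr` with `s, r` nonempty and `r` the lexicographically least proper suffix. -/
def StdFact [LinearOrder Y] (l s r : List Y) : Prop :=
  l = s ++ r ∧ s ≠ [] ∧ r ≠ [] ∧
  ∀ s' r' : List Y, l = s' ++ r' → s' ≠ [] → r' ≠ [] → r = r' ∨ List.Lex (· < ·) r r'

/-- `Pi` is the family defined by `Π_y = π₁(y)` on letters and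
`Π_l = [Π_s, Π_r]` for the standard factorization `(s,r)` of a Lyndon word `l`. -/
def IsPiFamily [LinearOrder Y]
    (m : (List Y →₀ K) →ₗ[K] (List Y →₀ K) →ₗ[K] (List Y →₀ K))
    (Pi : List Y → (List Y →₀ K)) : Prop :=
  (∀ y : Y, ∀ w : List Y, Pi [y] w = piOneS m (fun t => (word [y] : List Y →₀ K) t) w) ∧
  ∀ l s r : List Y, IsLyndon l → StdFact l s r →
    Pi l = concP (Pi s) (Pi r) - concP (Pi r) (Pi s)

/-! The dual `Δ` of the `φ`-shuffle is multiplicative for concatenation,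
`Δ(ST) = Δ(S) Δ(T)` in `K⟨⟨Y⟩⟩ ⊗ K⟨⟨Y⟩⟩`: both sides obey the recursion defining `⧢_φ`.
For primitive `S_i` this gives `Δ(S_1 ⋯ S_m) = Σ S_A ⊗ S_B` over the splittings of
`(S_1, …, S_m)` into complementary subsequences `A, B`, that is
`⟨S_1 ⋯ S_m, P ⧢_φ Q⟩ = Σ ⟨S_A, P⟩ ⟨S_B, Q⟩`. Take `P = P_1` and `Q = P_2 ⧢_φ ⋯ ⧢_φ P_n`:
a term with `A` empty contains `⟨1, P_1⟩ = 0`, and otherwise `B` has fewer than `n - 1`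
factors, so the term vanishes by induction on `n`. -/

/-- The pairs `(A, B)` of complementary subsequences of `l`, i.e. `l` appears in `A ⧢ B`,
counted with multiplicity. -/
def unshuffles {α : Type*} : List α → List (List α × List α)
  | [] => [([], [])]
  | a :: l => (unshuffles l).flatMap fun p => [(a :: p.1, p.2), (p.1, a :: p.2)]

lemma length_add_length_of_mem_unshuffles {α : Type*} {l : List α} {p : List α × List α}
    (hp : p ∈ unshuffles l) : p.1.length + p.2.length = l.length := by
  induction l generalizing p with
  | nil => simp_all [unshuffles]
  | cons a l ih =>
    simp only [unshuffles, List.mem_flatMap, List.mem_cons, List.not_mem_nil, or_false] at hp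
    obtain ⟨q, hq, rfl | rfl⟩ := hp <;> simp only [List.length_cons, ← ih hq] <;> omega

lemma snd_sublist_of_mem_unshuffles {α : Type*} {l : List α} {p : List α × List α}
    (hp : p ∈ unshuffles l) : p.2.Sublist l := by
  induction l generalizing p with
  | nil => simp_all [unshuffles]
  | cons a l ih =>
    simp only [unshuffles, List.mem_flatMap, List.mem_cons, List.not_mem_nil, or_false] at hp
    obtain ⟨q, hq, rfl | rfl⟩ := hp
    · exact (ih hq).cons a
    · exact (ih hq).cons_cons a

lemma sum_map_unshuffles_cons {α M : Type*} [AddCommMonoid M] (a : α) (l : List α)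
    (f : List α × List α → M) :
    ((unshuffles (a :: l)).map f).sum =
      ((unshuffles l).map fun p => f (a :: p.1, p.2) + f (p.1, a :: p.2)).sum := by
  simp only [unshuffles]
  induction unshuffles l with
  | nil => simp
  | cons p ps ih => simp [ih, add_assoc]

section

omit [Algebra ℚ K] [DecidableEq Y]

variable {φ : Y → Y → (Y →₀ K)} {m : (List Y →₀ K) →ₗ[K] (List Y →₀ K) →ₗ[K] (List Y →₀ K)}

def leftResidual (a : Y) (S : List Y → K) : List Y → K := fun w => S (a :: w)

def tensorS (A B : List Y → K) : List Y × List Y → K := fun p => A p.1 * B p.2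

/-- The concatenation product of `K⟨⟨Y⟩⟩ ⊗ K⟨⟨Y⟩⟩`, viewed as series in pairs of words. -/
def mulS₂ : (List Y × List Y → K) →ₗ[K] (List Y × List Y → K) →ₗ[K] (List Y × List Y → K) :=
  LinearMap.mk₂ K
    (fun A B p => ∑ i ∈ Finset.range (p.1.length + 1), ∑ j ∈ Finset.range (p.2.length + 1),
      A (p.1.take i, p.2.take j) * B (p.1.drop i, p.2.drop j))
    (by intros; funext; simp [add_mul, Finset.sum_add_distrib])
    (by intros; funext; simp [Finset.mul_sum, mul_assoc])
    (by intros; funext; simp [mul_add, Finset.sum_add_distrib])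
    (by intros; funext; simp [Finset.mul_sum, mul_left_comm])

def pairPS₂ (D : List Y × List Y → K) (p q : List Y →₀ K) : K :=
  p.sum fun u a => q.sum fun v b => a * b * D (u, v)

lemma pairPS_eq_linearCombination (S : List Y → K) (p : List Y →₀ K) :
    pairPS S p = Finsupp.linearCombination K S p := by
  simp [pairPS, Finsupp.linearCombination_apply]

lemma pairPS_word (S : List Y → K) (w : List Y) : pairPS S (word w) = S w := by
  simp [pairPS_eq_linearCombination, word]

lemma pairPS_oneS (p : List Y →₀ K) : pairPS oneS p = p [] := by
  simp only [pairPS, oneS, mul_ite, mul_one, mul_zero]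
  classical
  convert Finsupp.sum_ite_self_eq' p []

lemma pairPS_consL (S : List Y → K) (c : Y) (p : List Y →₀ K) :
    pairPS S (consL c p) = pairPS (leftResidual c S) p := by
  simp only [pairPS_eq_linearCombination, consL, Finsupp.lmapDomain_apply,
    Finsupp.linearCombination_mapDomain]
  rfl

lemma pairPS_add_left (S T : List Y → K) (p : List Y →₀ K) :
    pairPS (S + T) p = pairPS S p + pairPS T p := by
  simp [pairPS, mul_add, Finsupp.sum_add]

lemma pairPS_smul_left (k : K) (S : List Y → K) (p : List Y →₀ K) :
    pairPS (k • S) p = k * pairPS S p := by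
  simp [pairPS, Finsupp.mul_sum, mul_left_comm]

lemma leftResidual_oneS (c : Y) : leftResidual c (oneS : List Y → K) = 0 := by
  funext w; simp [leftResidual, oneS]

lemma leftResidual_mulS (c : Y) (S T : List Y → K) :
    leftResidual c (mulS S T) = S [] • leftResidual c T + mulS (leftResidual c S) T := by
  funext w
  simp only [leftResidual, mulS, List.length_cons, Finset.sum_range_succ' _ (w.length + 1)]
  simp [leftResidual, mulS, add_comm]

lemma oneS_mulS (T : List Y → K) : mulS oneS T = T := by
  funext w
  rw [mulS, Finset.sum_eq_single 0]
  · simp [oneS]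
  · intro i _ hi
    have : w ≠ [] := by rintro rfl; simp_all
    simp [oneS, List.take_eq_nil_iff, hi, this]
  · simp

lemma deltaS_nil_left (hm : IsPhiShuffle φ m) (S : List Y → K) :
    (fun v => DeltaS m S ([], v)) = S := by
  funext v; rw [DeltaS, hm.1, pairPS_word]

lemma deltaS_nil_right (hm : IsPhiShuffle φ m) (S : List Y → K) :
    (fun u => DeltaS m S (u, [])) = S := by
  funext u; rw [DeltaS, hm.2.1, pairPS_word]

lemma deltaS_cons_cons (hm : IsPhiShuffle φ m) (S : List Y → K) (a b : Y) (u v : List Y) :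
    DeltaS m S (a :: u, b :: v) =
      DeltaS m (leftResidual a S) (u, b :: v) + DeltaS m (leftResidual b S) (a :: u, v) +
        (φ a b).sum fun c k => k * DeltaS m (leftResidual c S) (u, v) := by
  rw [DeltaS, hm.2.2, pairPS_eq_linearCombination]
  simp only [map_add, map_finsuppSum, map_smul, smul_eq_mul, ← pairPS_eq_linearCombination,
    pairPS_consL, DeltaS]

lemma deltaS_add (S T : List Y → K) : DeltaS m (S + T) = DeltaS m S + DeltaS m T := by
  funext p; simp [DeltaS, pairPS_add_left]

lemma deltaS_smul (k : K) (S : List Y → K) : DeltaS m (k • S) = k • DeltaS m S := by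
  funext p; simp [DeltaS, pairPS_smul_left]

lemma deltaS_zero : DeltaS m (0 : List Y → K) = 0 := by
  simpa using deltaS_smul (m := m) (0 : K) 0

lemma deltaS_oneS (hm : IsPhiShuffle φ m) : DeltaS m (oneS : List Y → K) = tensorS oneS oneS := by
  funext ⟨u, v⟩
  match u, v with
  | [], v => simp [congrFun (deltaS_nil_left hm _) v, tensorS, oneS]
  | a :: u, [] => simp [congrFun (deltaS_nil_right hm _) (a :: u), tensorS, oneS]
  | a :: u, b :: v => simp [deltaS_cons_cons hm, leftResidual_oneS, deltaS_zero, tensorS, oneS]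

lemma mulS₂_apply (A B : List Y × List Y → K) (u v : List Y) :
    mulS₂ A B (u, v) = ∑ i ∈ Finset.range (u.length + 1), ∑ j ∈ Finset.range (v.length + 1),
      A (u.take i, v.take j) * B (u.drop i, v.drop j) := rfl

lemma mulS₂_nil_left (A B : List Y × List Y → K) (v : List Y) :
    mulS₂ A B ([], v) = mulS (fun y => A ([], y)) (fun y => B ([], y)) v := by
  simp [mulS₂_apply, mulS]

lemma mulS₂_nil_right (A B : List Y × List Y → K) (u : List Y) :
    mulS₂ A B (u, []) = mulS (fun x => A (x, [])) (fun x => B (x, [])) u := by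
  simp [mulS₂_apply, mulS]

lemma mulS₂_cons_left (A B : List Y × List Y → K) (a : Y) (u v : List Y) :
    mulS₂ A B (a :: u, v) = mulS (fun y => A ([], y)) (fun y => B (a :: u, y)) v +
      mulS₂ (fun p => A (a :: p.1, p.2)) B (u, v) := by
  rw [mulS₂_apply, List.length_cons, Finset.sum_range_succ', add_comm]
  simp [mulS₂_apply, mulS]

lemma mulS₂_cons_right (A B : List Y × List Y → K) (b : Y) (u v : List Y) :
    mulS₂ A B (u, b :: v) = mulS (fun x => A (x, [])) (fun x => B (x, b :: v)) u +
      mulS₂ (fun p => A (p.1, b :: p.2)) B (u, v) := by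
  simp only [mulS₂_apply, List.length_cons, Finset.sum_range_succ' _ (v.length + 1)]
  simp [mulS, Finset.sum_add_distrib, add_comm]

lemma mulS_cons (S T : List Y → K) (c : Y) (w : List Y) :
    mulS S T (c :: w) = S [] * T (c :: w) + mulS (leftResidual c S) T w := by
  simpa [leftResidual, add_comm] using congrFun (leftResidual_mulS c S T) w

lemma deltaS_mulS_cons_cons (hm : IsPhiShuffle φ m) (S T : List Y → K) (a b : Y)
    (u v : List Y) :
    DeltaS m (mulS S T) (a :: u, b :: v) =
      S [] * DeltaS m T (a :: u, b :: v) + DeltaS m (mulS (leftResidual a S) T) (u, b :: v) +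
        DeltaS m (mulS (leftResidual b S) T) (a :: u, v) +
        (φ a b).sum fun c k => k * DeltaS m (mulS (leftResidual c S) T) (u, v) := by
  simp only [deltaS_cons_cons hm, leftResidual_mulS, deltaS_add, deltaS_smul, Pi.add_apply,
    Pi.smul_apply, smul_eq_mul, mul_add, Finsupp.sum_add, Finsupp.mul_sum, mul_left_comm]
  ring

lemma mulS₂_deltaS_cons_cons (hm : IsPhiShuffle φ m) (S : List Y → K)
    (B : List Y × List Y → K) (a b : Y) (u v : List Y) :
    mulS₂ (DeltaS m S) B (a :: u, b :: v) =
      S [] * B (a :: u, b :: v) + mulS₂ (DeltaS m (leftResidual a S)) B (u, b :: v) +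
        mulS₂ (DeltaS m (leftResidual b S)) B (a :: u, v) +
        (φ a b).sum fun c k => k * mulS₂ (DeltaS m (leftResidual c S)) B (u, v) := by
  have hcore : (fun p : List Y × List Y => DeltaS m S (a :: p.1, b :: p.2)) =
      (fun p => DeltaS m (leftResidual a S) (p.1, b :: p.2)) +
        (fun p => DeltaS m (leftResidual b S) (a :: p.1, p.2)) +
        (φ a b).sum fun c k => k • DeltaS m (leftResidual c S) := by
    funext p
    simp [deltaS_cons_cons hm, Finsupp.sum, Finset.sum_apply]
  have hres : (fun x => DeltaS m S (a :: x, [])) = leftResidual a S :=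
    funext fun x => congrFun (deltaS_nil_right hm S) (a :: x)
  rw [mulS₂_cons_left, deltaS_nil_left hm, mulS_cons, mulS₂_cons_right, hres, hcore,
    mulS₂_cons_right, mulS₂_cons_left, deltaS_nil_left hm, deltaS_nil_right hm]
  simp only [Finsupp.sum, map_add, map_sum, map_smul, LinearMap.add_apply, LinearMap.sum_apply,
    LinearMap.smul_apply, Pi.add_apply, Finset.sum_apply, Pi.smul_apply, smul_eq_mul]
  ring

lemma deltaS_mulS_apply (hm : IsPhiShuffle φ m) :
    ∀ (u v : List Y) (S T : List Y → K),
      DeltaS m (mulS S T) (u, v) = mulS₂ (DeltaS m S) (DeltaS m T) (u, v)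
  | [], v, S, T => by
      rw [mulS₂_nil_left, deltaS_nil_left hm, deltaS_nil_left hm]
      exact congrFun (deltaS_nil_left hm _) v
  | a :: u, [], S, T => by
      rw [mulS₂_nil_right, deltaS_nil_right hm, deltaS_nil_right hm]
      exact congrFun (deltaS_nil_right hm _) (a :: u)
  | a :: u, b :: v, S, T => by
      rw [deltaS_mulS_cons_cons hm, mulS₂_deltaS_cons_cons hm, deltaS_mulS_apply hm u (b :: v),
        deltaS_mulS_apply hm (a :: u) v]
      congr 1
      exact Finsupp.sum_congr fun c _ => by rw [deltaS_mulS_apply hm u v]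
termination_by u v => u.length + v.length

theorem deltaS_mulS (hm : IsPhiShuffle φ m) (S T : List Y → K) :
    DeltaS m (mulS S T) = mulS₂ (DeltaS m S) (DeltaS m T) :=
  funext fun p => deltaS_mulS_apply hm p.1 p.2 S T

lemma mulS₂_tensorS (A B C D : List Y → K) :
    mulS₂ (tensorS A B) (tensorS C D) = tensorS (mulS A C) (mulS B D) := by
  funext ⟨u, v⟩
  simp only [mulS₂_apply, tensorS, mulS, Finset.sum_mul_sum]
  exact Finset.sum_congr rfl fun i _ => Finset.sum_congr rfl fun j _ => by ring

lemma PrimS.deltaS_eq {S : List Y → K} (hS : PrimS m S) :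
    DeltaS m S = tensorS S oneS + tensorS oneS S := by
  funext ⟨u, v⟩
  simp [hS u v, tensorS, oneS]

theorem deltaS_prodS (hm : IsPhiShuffle φ m) (Ss : List (List Y → K))
    (hS : ∀ S ∈ Ss, PrimS m S) :
    DeltaS m (prodS Ss) = ((unshuffles Ss).map fun r => tensorS (prodS r.1) (prodS r.2)).sum := by
  induction Ss with
  | nil => simp [prodS, unshuffles, deltaS_oneS hm]
  | cons S L ih =>
    have hL : ∀ S ∈ L, PrimS m S := fun S h => hS S (List.mem_cons_of_mem _ h)
    calc DeltaS m (prodS (S :: L))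
        = mulS₂ (tensorS S oneS + tensorS oneS S)
            ((unshuffles L).map fun r => tensorS (prodS r.1) (prodS r.2)).sum := by
          rw [← ih hL, ← (hS S List.mem_cons_self).deltaS_eq]
          exact deltaS_mulS hm S (prodS L)
      _ = ((unshuffles (S :: L)).map fun r => tensorS (prodS r.1) (prodS r.2)).sum := by
          rw [sum_map_unshuffles_cons, map_list_sum, List.map_map]
          simp [Function.comp_def, mulS₂_tensorS, oneS_mulS, prodS]

lemma pairPS_m_eq_pairPS₂_deltaS (R : List Y → K) (p q : List Y →₀ K) :
    pairPS R (m p q) = pairPS₂ (DeltaS m R) p q := by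
  conv_lhs => rw [← p.sum_single, ← q.sum_single, pairPS_eq_linearCombination]
  simp only [map_finsuppSum, LinearMap.finsupp_sum_apply, pairPS₂]
  rw [Finsupp.sum_comm]
  refine Finsupp.sum_congr fun u _ => ?_
  refine Finsupp.sum_congr fun v _ => ?_
  rw [← Finsupp.smul_single_one u, ← Finsupp.smul_single_one v]
  simp only [map_smul, LinearMap.smul_apply, smul_eq_mul, DeltaS, word, pairPS_eq_linearCombination]
  ring

lemma pairPS₂_tensorS (A B : List Y → K) (p q : List Y →₀ K) :
    pairPS₂ (tensorS A B) p q = pairPS A p * pairPS B q := by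
  rw [pairPS₂, pairPS, pairPS, Finsupp.sum_mul]
  refine Finsupp.sum_congr fun u _ => ?_
  rw [Finsupp.mul_sum]
  exact Finsupp.sum_congr fun v _ => by simp only [tensorS]; ring

lemma pairPS₂_add (D E : List Y × List Y → K) (p q : List Y →₀ K) :
    pairPS₂ (D + E) p q = pairPS₂ D p q + pairPS₂ E p q := by
  simp [pairPS₂, mul_add, Finsupp.sum_add]

lemma pairPS₂_list_sum {ι : Type*} (l : List ι) (D : ι → List Y × List Y → K)
    (p q : List Y →₀ K) :
    pairPS₂ (l.map D).sum p q = (l.map fun i => pairPS₂ (D i) p q).sum := by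
  induction l with
  | nil => simp [pairPS₂]
  | cons i l ih =>
    rw [List.map_cons, List.sum_cons, pairPS₂_add, ih, List.map_cons, List.sum_cons]

theorem pairPS_prodS_m_eq_sum_unshuffles (hm : IsPhiShuffle φ m) (Ss : List (List Y → K))
    (hS : ∀ S ∈ Ss, PrimS m S) (p q : List Y →₀ K) :
    pairPS (prodS Ss) (m p q) =
      ((unshuffles Ss).map fun r => pairPS (prodS r.1) p * pairPS (prodS r.2) q).sum := by
  simp only [pairPS_m_eq_pairPS₂_deltaS, deltaS_prodS hm Ss hS, pairPS₂_list_sum, pairPS₂_tensorS]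

end

theorem pairing_products_orthogonal_general (φ : Y → Y → (Y →₀ K))
    (m : (List Y →₀ K) →ₗ[K] (List Y →₀ K) →ₗ[K] (List Y →₀ K))
    (hm : IsPhiShuffle φ m)
    (Ps : List (List Y →₀ K)) (Ss : List (List Y → K))
    (hP : ∀ P ∈ Ps, P ([] : List Y) = 0) (hS : ∀ S ∈ Ss, PrimS m S)
    (hlen : Ss.length < Ps.length) :
    pairPS (prodS Ss) (prodM m Ps) = 0 := by
  induction Ps generalizing Ss with
  | nil => simp at hlen
  | cons P Ps ih =>
    change pairPS (prodS Ss) (m P (prodM m Ps)) = 0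
    rw [pairPS_prodS_m_eq_sum_unshuffles hm Ss hS]
    refine List.sum_eq_zero fun x hx => ?_
    obtain ⟨⟨A, B⟩, hAB, rfl⟩ := List.mem_map.1 hx
    cases A with
    | nil =>
      change pairPS oneS P * _ = 0
      rw [pairPS_oneS, hP P List.mem_cons_self, zero_mul]
    | cons S A =>
      have hlenAB := length_add_length_of_mem_unshuffles hAB
      have hB : ∀ S ∈ B, PrimS m S :=
        fun S h => hS S ((snd_sublist_of_mem_unshuffles hAB).subset h)
      rw [ih B (fun P h => hP P (List.mem_cons_of_mem _ h)) hB (by simp at hlen hlenAB; omega),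
        mul_zero]

/-- pairing of products, orthogonality: if `S_1,…,S_m` are
primitive series, `P_1,…,P_n` proper polynomials and `n > m`, then
`⟨P_1 ⧢_φ ⋯ ⧢_φ P_n, S_1 ⋯ S_m⟩ = 0`. -/
theorem pairing_products_orthogonal (φ : Y → Y → (Y →₀ K))
    (m : (List Y →₀ K) →ₗ[K] (List Y →₀ K) →ₗ[K] (List Y →₀ K))
    (hm : IsPhiShuffle φ m) (hassoc : PhiAssoc φ) (hcomm : PhiComm φ)
    (hdual : PhiDualizable φ)
    (Ps : List (List Y →₀ K)) (Ss : List (List Y → K))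
    (hP : ∀ P ∈ Ps, P ([] : List Y) = 0) (hS : ∀ S ∈ Ss, PrimS m S)
    (hlen : Ss.length < Ps.length) :
    pairPS (prodS Ss) (prodM m Ps) = 0 :=
  pairing_products_orthogonal_general φ m hm Ps Ss hP hS hlen

end
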